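/- Let S ⊆ {1,…,p}, X ∈ ℝ^{n×p} with max_{i,j}|X_{i,j}| ≤ K₀ and ‖Σⁿ_{S^c,S}(Σⁿ_{S,S})⁻¹‖∞ ≤ κ (max row ℓ₁ norm), where Σⁿ = XᵀX/n. Let P⊥_S be the orthogonal projection onto the orthogonal complement of the column span of X_S. Then max_{j∈S^c} ‖P⊥_S x_j‖₄⁴ ≤ n K₀²(1+κ)². -/
import Mathlib


open Matrix BigOperators Finset

/-- fourth-moment bound on projected columns:
`max_{j∈S^c} ‖P⊥_S x_j‖₄⁴ ≤ n K₀²(1+κ)²`. -/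
theorem stmt_17 {n p : ℕ} (hn : 0 < n)
    (X : Matrix (Fin n) (Fin p) ℝ)
    (S : Finset (Fin p))
    (K0 kap : ℝ) (hK0 : 0 < K0) (hkap0 : 0 ≤ kap) (hkap1 : kap < 1)
    (hX : ∀ i k, |X i k| ≤ K0)
    -- normalized columns: ‖x_j‖₂² = n
    (hcols : ∀ k, ∑ i, (X i k) ^ 2 = (n : ℝ))
    (G : Matrix ↥S ↥S ℝ)
    (hG : ∀ a b : ↥S, G a b = ∑ i, X i a.1 * X i b.1)
    (hinv : IsUnit G.det)
    -- incoherence: ‖Σⁿ_{S^c,S}(Σⁿ_{S,S})⁻¹‖∞ ≤ κ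
    (hinc : ∀ j, j ∉ S →
        ∑ a : ↥S, |∑ b : ↥S, (∑ i, X i j * X i b.1) * G⁻¹ b a| ≤ kap) :
    ∀ j, j ∉ S →
      ∑ i, (X i j - ∑ a : ↥S, X i a.1 *
            (G⁻¹ *ᵥ fun b : ↥S => ∑ i', X i' b.1 * X i' j) a) ^ 4
        ≤ n * K0 ^ 2 * (1 + kap) ^ 2 := by
  intro j hj
  set c : ↥S → ℝ := fun b => ∑ i', X i' b.1 * X i' j with hc
  set w : ↥S → ℝ := G⁻¹ *ᵥ c with hwdef
  set t : Fin n → ℝ := fun i => ∑ a : ↥S, X i a.1 * w a with ht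
  -- G is symmetric, hence so is G⁻¹
  have hGsym : Gᵀ = G := by
    ext a b
    simp only [transpose_apply, hG]
    exact Finset.sum_congr rfl fun i _ => mul_comm _ _
  have hGinvsym : ∀ a b : ↥S, G⁻¹ a b = G⁻¹ b a := by
    intro a b
    have h : (G⁻¹)ᵀ = G⁻¹ := by rw [Matrix.transpose_nonsing_inv, hGsym]
    exact (congrFun (congrFun h a) b).symm
  -- ℓ¹ bound on w
  have hwb : ∑ a, |w a| ≤ kap := by
    refine le_trans (le_of_eq ?_) (hinc j hj)
    refine Finset.sum_congr rfl fun a _ => congrArg abs ?_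
    show (G⁻¹ *ᵥ c) a = _
    simp only [mulVec, dotProduct]
    refine Finset.sum_congr rfl fun b _ => ?_
    rw [hGinvsym a b]
    have : c b = ∑ i, X i j * X i b.1 :=
      Finset.sum_congr rfl fun i _ => mul_comm _ _
    rw [this]; ring
  have hGw : G *ᵥ w = c := by
    rw [hwdef, mulVec_mulVec, Matrix.mul_nonsing_inv G hinv, one_mulVec]
  -- ∑ X i a * t i = c a
  have hXt : ∀ a : ↥S, ∑ i, X i a.1 * t i = c a := by
    intro a
    calc ∑ i, X i a.1 * t i = ∑ i, ∑ b, X i a.1 * (X i b.1 * w b) := by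
          simp only [ht, Finset.mul_sum]
      _ = ∑ b, (∑ i, X i a.1 * X i b.1) * w b := by
          rw [Finset.sum_comm]
          exact Finset.sum_congr rfl fun b _ => by
            rw [Finset.sum_mul]
            exact Finset.sum_congr rfl fun i _ => by ring
      _ = (G *ᵥ w) a := by
          simp only [mulVec, dotProduct, hG]
      _ = c a := congrFun hGw a
  have h1 : ∑ i, X i j * t i = ∑ a, w a * c a := by
    calc ∑ i, X i j * t i = ∑ i, ∑ a, X i j * (X i a.1 * w a) := by
          simp only [ht, Finset.mul_sum]
      _ = ∑ a, w a * c a := by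
          rw [Finset.sum_comm]
          refine Finset.sum_congr rfl fun a _ => ?_
          have : c a = ∑ i, X i a.1 * X i j := rfl
          rw [this, Finset.mul_sum]
          exact Finset.sum_congr rfl fun i _ => by ring
  have h2 : ∑ i, t i ^ 2 = ∑ a, w a * c a := by
    calc ∑ i, t i ^ 2 = ∑ i, ∑ a, X i a.1 * w a * t i := by
          refine Finset.sum_congr rfl fun i _ => ?_
          rw [sq]
          conv_lhs => rw [ht]
          rw [Finset.sum_mul]
      _ = ∑ a, w a * ∑ i, X i a.1 * t i := by
          rw [Finset.sum_comm]
          refine Finset.sum_congr rfl fun a _ => ?_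
          rw [Finset.mul_sum]
          exact Finset.sum_congr rfl fun i _ => by ring
      _ = ∑ a, w a * c a := by
          exact Finset.sum_congr rfl fun a _ => by rw [hXt a]
  -- ∑ (X i j - t i)² ≤ n
  have hsq : ∑ i, (X i j - t i) ^ 2 ≤ (n : ℝ) := by
    have key : ∑ i, (X i j - t i) ^ 2 = (n : ℝ) - ∑ i, t i ^ 2 := by
      have expand : ∀ i ∈ Finset.univ (α := Fin n),
          (X i j - t i) ^ 2 = X i j ^ 2 - 2 * (X i j * t i) + t i ^ 2 :=
        fun i _ => by ring
      rw [Finset.sum_congr rfl expand, Finset.sum_add_distrib,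
        Finset.sum_sub_distrib, ← Finset.mul_sum, hcols j, h1, h2]
      ring
    have ht2 : (0 : ℝ) ≤ ∑ i, t i ^ 2 :=
      Finset.sum_nonneg fun i _ => sq_nonneg _
    linarith
  -- pointwise bound
  have hr : ∀ i, |X i j - t i| ≤ K0 * (1 + kap) := by
    intro i
    have hti : |t i| ≤ K0 * kap := by
      calc |t i| ≤ ∑ a, |X i a.1 * w a| := Finset.abs_sum_le_sum_abs _ _
        _ = ∑ a, |X i a.1| * |w a| := by simp [abs_mul]
        _ ≤ ∑ a, K0 * |w a| :=
            Finset.sum_le_sum fun a _ =>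
              mul_le_mul_of_nonneg_right (hX i a.1) (abs_nonneg _)
        _ = K0 * ∑ a, |w a| := by rw [Finset.mul_sum]
        _ ≤ K0 * kap := mul_le_mul_of_nonneg_left hwb hK0.le
    calc |X i j - t i| ≤ |X i j| + |t i| := abs_sub _ _
      _ ≤ K0 + K0 * kap := add_le_add (hX i j) hti
      _ = K0 * (1 + kap) := by ring
  have hr2 : ∀ i, (X i j - t i) ^ 2 ≤ (K0 * (1 + kap)) ^ 2 := by
    intro i
    rw [← sq_abs]
    exact pow_le_pow_left₀ (abs_nonneg _) (hr i) 2
  calc ∑ i, (X i j - t i) ^ 4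
      = ∑ i, (X i j - t i) ^ 2 * (X i j - t i) ^ 2 :=
        Finset.sum_congr rfl fun i _ => by ring
    _ ≤ ∑ i, (K0 * (1 + kap)) ^ 2 * (X i j - t i) ^ 2 :=
        Finset.sum_le_sum fun i _ =>
          mul_le_mul_of_nonneg_right (hr2 i) (sq_nonneg _)
    _ = (K0 * (1 + kap)) ^ 2 * ∑ i, (X i j - t i) ^ 2 := by
        rw [Finset.mul_sum]
    _ ≤ (K0 * (1 + kap)) ^ 2 * n :=
        mul_le_mul_of_nonneg_left hsq (sq_nonneg _)
    _ = n * K0 ^ 2 * (1 + kap) ^ 2 := by ring
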